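/- arXiv:1501.00200 — 3 statements merged into one kernel-verified Lean document; each statement's English description precedes it below -/
import Mathlib

section
/- In the combinatorial horoball over ℤ, for any two vertices (x, 0) and (y, 0) at level zero with x ≠ y, the graph distance satisfies d((x,0),(y,0)) ≤ 2·log₂(|x−y|) + 3. -/
/-- The combinatorial horoball over ℤ: vertices `ℤ × ℕ`, with horizontal edges
`(x,m)—(y,m)` whenever `0 < |x−y| ≤ 2^m` and vertical edges `(x,m)—(x,m+1)`. -/
def Horoball : SimpleGraph (ℤ × ℕ) :=
  SimpleGraph.fromRel (fun a b =>
    (a.2 = b.2 ∧ |a.1 - b.1| ≤ 2 ^ a.2) ∨ (a.1 = b.1 ∧ b.2 = a.2 + 1))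

lemma horoball_adj_vert (x : ℤ) (m : ℕ) : Horoball.Adj (x, m) (x, m + 1) := by
  rw [Horoball, SimpleGraph.fromRel_adj]
  refine ⟨by simp, Or.inl (Or.inr ⟨rfl, rfl⟩)⟩

lemma horoball_adj_horiz (x y : ℤ) (m : ℕ) (h : x ≠ y) (hle : |x - y| ≤ 2 ^ m) :
    Horoball.Adj (x, m) (y, m) := by
  rw [Horoball, SimpleGraph.fromRel_adj]
  exact ⟨by simp [h], Or.inl (Or.inl ⟨rfl, hle⟩)⟩

def upWalk (x : ℤ) : (m : ℕ) → Horoball.Walk (x, 0) (x, m)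
  | 0 => SimpleGraph.Walk.nil
  | m + 1 => (upWalk x m).concat (horoball_adj_vert x m)

lemma upWalk_length (x : ℤ) (m : ℕ) : (upWalk x m).length = m := by
  induction m with
  | zero => rfl
  | succ n ih => simp [upWalk, SimpleGraph.Walk.length_concat, ih]

/-- Upper bound on horoball distance between level-zero vertices:
`d((x,0),(y,0)) ≤ 2 log₂ |x−y| + 3`. -/
theorem stmt8 (x y : ℤ) (hxy : x ≠ y) :
    (Horoball.dist (x, 0) (y, 0) : ℝ) ≤ 2 * Real.logb 2 |(x : ℝ) - (y : ℝ)| + 3 := by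
  set n : ℕ := (x - y).natAbs with hn
  have hn1 : 1 ≤ n := by
    have h0 : x - y ≠ 0 := sub_ne_zero.mpr hxy
    have := Int.natAbs_pos.mpr h0
    omega
  set m : ℕ := Nat.log 2 n + 1 with hm
  -- build the walk
  have hle : |x - y| ≤ 2 ^ m := by
    have h2 : n < 2 ^ m := Nat.lt_pow_succ_log_self (by norm_num) n
    have : (n : ℤ) < 2 ^ m := by exact_mod_cast h2
    calc |x - y| = (n : ℤ) := (Int.abs_eq_natAbs _).trans (by rw [hn])
      _ ≤ 2 ^ m := le_of_lt this
  have hadj : Horoball.Adj (x, m) (y, m) := horoball_adj_horiz x y m hxy hle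
  let w : Horoball.Walk (x, 0) (y, 0) :=
    (upWalk x m).append (SimpleGraph.Walk.cons hadj (upWalk y m).reverse)
  have hwl : w.length = 2 * m + 1 := by
    simp [w, SimpleGraph.Walk.length_append, SimpleGraph.Walk.length_cons,
      SimpleGraph.Walk.length_reverse, upWalk_length]
    ring
  have hdist : Horoball.dist (x, 0) (y, 0) ≤ 2 * m + 1 := hwl ▸ SimpleGraph.dist_le w
  -- numeric bound
  have habs : |(x : ℝ) - (y : ℝ)| = (n : ℝ) := by
    rw [hn, Nat.cast_natAbs]
    push_cast
    ring_nf
  have hlog : (Nat.log 2 n : ℝ) ≤ Real.logb 2 n := Real.natLog_le_logb n 2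
  calc ((Horoball.dist (x, 0) (y, 0) : ℕ) : ℝ) ≤ ((2 * m + 1 : ℕ) : ℝ) := by exact_mod_cast hdist
    _ = 2 * (Nat.log 2 n : ℝ) + 3 := by push_cast [hm]; ring
    _ ≤ 2 * Real.logb 2 n + 3 := by linarith
    _ = 2 * Real.logb 2 |(x : ℝ) - (y : ℝ)| + 3 := by rw [habs]
end

section
/- In the combinatorial horoball over ℤ, the graph distance between (x,0) and (y,0) is at least log₂(|x−y|) for x ≠ y: any path between two level-zero vertices whose horizontal displacement is D has length at least log₂ D. -/
lemma horoball_adj01 (x : ℤ) : Horoball.Adj (x, 0) (x + 1, 0) := by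
  rw [Horoball, SimpleGraph.fromRel_adj]
  refine ⟨by simp, Or.inl (Or.inl ⟨rfl, by simp⟩)⟩

lemma horoball_reach_add (x : ℤ) (n : ℕ) :
    Horoball.Reachable (x, 0) (x + n, 0) := by
  induction n with
  | zero => simp [SimpleGraph.Reachable.refl]
  | succ k ih =>
    refine ih.trans ?_
    have := (horoball_adj01 (x + k)).reachable
    convert this using 2
    push_cast; ring

lemma horoball_reach (x y : ℤ) : Horoball.Reachable (x, 0) (y, 0) := by
  rcases le_total x y with h | h
  · have := horoball_reach_add x (y - x).toNat
    rwa [Int.toNat_of_nonneg (by omega), add_sub_cancel] at this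
  · have := horoball_reach_add y (x - y).toNat
    rw [Int.toNat_of_nonneg (by omega), add_sub_cancel] at this
    exact this.symm

lemma pow_le_pow_int {m m' : ℕ} (h : m ≤ m') : (2 : ℤ) ^ m ≤ 2 ^ m' :=
  pow_le_pow_right₀ (by norm_num) h

lemma horoball_disp : ∀ {a b : ℤ × ℕ} (w : Horoball.Walk a b),
    |a.1 - b.1| ≤ 2 ^ (a.2 + w.length) - 2 ^ a.2 := by
  intro a b w
  induction w with
  | nil => simp
  | @cons a b c h p ih =>
    have htri : |a.1 - c.1| ≤ |a.1 - b.1| + |b.1 - c.1| := abs_sub_le _ _ _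
    rw [Horoball, SimpleGraph.fromRel_adj] at h
    rcases h.2 with (⟨h1, h2⟩ | ⟨h1, h2⟩) | (⟨h1, h2⟩ | ⟨h1, h2⟩)
    · -- horizontal, b.2 = a.2
      rw [SimpleGraph.Walk.length_cons]
      have hb : |b.1 - c.1| ≤ 2 ^ (a.2 + p.length) - 2 ^ a.2 := by
        rw [h1]; exact ih
      have h3 : (2:ℤ) ^ a.2 ≤ 2 ^ (a.2 + p.length) := pow_le_pow_int (by omega)
      have h4 : (2:ℤ) ^ (a.2 + p.length) + 2 ^ (a.2 + p.length) = 2 ^ (a.2 + (p.length + 1)) := by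
        rw [show a.2 + (p.length + 1) = (a.2 + p.length) + 1 by omega, pow_succ]; ring
      linarith
    · -- vertical up, b.2 = a.2 + 1
      rw [SimpleGraph.Walk.length_cons]
      have hb : |b.1 - c.1| ≤ 2 ^ (a.2 + 1 + p.length) - 2 ^ (a.2 + 1) := by
        rw [← h2]; exact ih
      have h3 : (2:ℤ) ^ a.2 ≤ 2 ^ (a.2 + 1) := pow_le_pow_int (by omega)
      have h4 : (2:ℤ) ^ (a.2 + 1 + p.length) ≤ 2 ^ (a.2 + (p.length + 1)) :=
        pow_le_pow_int (by omega)
      have h5 : |a.1 - b.1| = 0 := by rw [h1]; simp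
      linarith
    · -- horizontal, a.2 = b.2 (symmetric)
      rw [SimpleGraph.Walk.length_cons]
      have hb : |b.1 - c.1| ≤ 2 ^ (a.2 + p.length) - 2 ^ a.2 := by
        rw [← h1]; exact ih
      have hab : |a.1 - b.1| ≤ 2 ^ a.2 := by
        rw [abs_sub_comm, ← h1]; exact h2
      have h3 : (2:ℤ) ^ a.2 ≤ 2 ^ (a.2 + p.length) := pow_le_pow_int (by omega)
      have h4 : (2:ℤ) ^ (a.2 + p.length) + 2 ^ (a.2 + p.length) = 2 ^ (a.2 + (p.length + 1)) := by
        rw [show a.2 + (p.length + 1) = (a.2 + p.length) + 1 by omega, pow_succ]; ring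
      linarith
    · -- vertical down, a.2 = b.2 + 1
      rw [SimpleGraph.Walk.length_cons]
      have hb : |b.1 - c.1| ≤ 2 ^ (b.2 + p.length) - 2 ^ b.2 := ih
      have h3 : (2:ℤ) ^ (b.2 + p.length) ≤ 2 ^ (a.2 + (p.length + 1)) :=
        pow_le_pow_int (by omega)
      have h4 : (2:ℤ) ^ a.2 ≤ 2 ^ (a.2 + (p.length + 1)) := pow_le_pow_int (by omega)
      have h5 : |a.1 - b.1| = 0 := by rw [h1]; simp
      have h6 : (0:ℤ) < 2 ^ b.2 := by positivity
      -- need: 2^(b.2+n) - 2^b.2 ≤ 2^(a.2+(n+1)) - 2^a.2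
      -- a.2 = b.2+1, so rhs = 2^(b.2+n+2) - 2^(b.2+1)
      have ha2 : a.2 = b.2 + 1 := h2
      have h7 : (2:ℤ) ^ (b.2 + p.length) + 2 ^ a.2 ≤ 2 ^ (a.2 + (p.length + 1)) := by
        calc (2:ℤ) ^ (b.2 + p.length) + 2 ^ a.2
            ≤ 2 ^ (b.2 + p.length + 1) + 2 ^ (b.2 + p.length + 1) := by
              refine add_le_add (pow_le_pow_int (by omega)) (pow_le_pow_int (by omega))
          _ = 2 ^ (b.2 + p.length + 2) := by rw [pow_succ]; ring
          _ ≤ 2 ^ (a.2 + (p.length + 1)) := pow_le_pow_int (by omega)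
      linarith

/-- Lower bound on horoball distance between level-zero vertices:
`log₂ |x−y| ≤ d((x,0),(y,0))`. -/
theorem stmt9 (x y : ℤ) (hxy : x ≠ y) :
    Real.logb 2 |(x : ℝ) - (y : ℝ)| ≤ (Horoball.dist (x, 0) (y, 0) : ℝ) := by
  obtain ⟨w, hw⟩ := (horoball_reach x y).exists_walk_length_eq_dist
  set n := Horoball.dist (x, 0) (y, 0) with hn
  have hdisp := horoball_disp w
  simp only [hw] at hdisp
  have h2 : |x - y| ≤ 2 ^ n := by
    have : (2:ℤ) ^ (0 + n) - 2 ^ 0 ≤ 2 ^ n := by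
      simp
    exact le_trans hdisp this
  have hpos : (0:ℝ) < |(x:ℝ) - (y:ℝ)| := by
    have : (x:ℝ) ≠ (y:ℝ) := by exact_mod_cast hxy
    simpa [sub_ne_zero] using abs_pos.mpr (sub_ne_zero.mpr this)
  rw [Real.logb_le_iff_le_rpow (by norm_num) hpos]
  rw [Real.rpow_natCast]
  calc |(x:ℝ) - (y:ℝ)| = ((|x - y| : ℤ) : ℝ) := by push_cast; ring_nf
    _ ≤ ((2 ^ n : ℤ) : ℝ) := by exact_mod_cast h2
    _ = 2 ^ n := by push_cast; ring
end

section
/- Suppose a metric space X admits a family 𝓛 of closed subspaces which separates points (for any x ≠ y in X there is L ∈ 𝓛 with x and y in different components, i.e., different quasi-components, of X \ L) and ind(L') ≤ N − 1 for every locally compact subspace L' of every L ∈ 𝓛. Then every locally compact subspace of X has small inductive dimension at most N. -/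
/-!
Take a compact neighbourhood `C ⊆ U` of `x` in `K` and put `D = int C`. Each point `y` of the
compact set `∂D` is separated from `x` by some `L_y ∈ 𝓛`, with `x ∈ U_y` and `y ∈ V_y`; finitely
many `V_y` cover `∂D`, and `V = D ∩ ⋂ U_y` is an open neighbourhood of `x` whose compact frontier
lies in finitely many `L_y`. Each `∂V ∩ L_y` is a compact subset of `L_y`, hence of dimension
`≤ N - 1`, and the closed sum theorem for separable metrizable spaces gives `ind ∂V ≤ N - 1`.

The sum theorem goes by induction on the dimension (Menger–Urysohn): a space of dimension `≤ n`
is a countable union of closed sets of dimension `≤ n - 1` and a zero-dimensional remainder; the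
union of a set of dimension `≤ n - 1` and a zero-dimensional set has dimension `≤ n`, because two
disjoint closed sets can be separated by an open set whose frontier misses the zero-dimensional
part; and in dimension zero a pair of open sets with disjoint closures is enlarged to absorb the
closed pieces one at a time.
-/

universe u

/-- `IndLe n X` means the small inductive dimension of `X` is at most `n - 1`:
`IndLe 0 X` iff `X` is empty, and `IndLe (n+1) X` iff every point of `X` has
arbitrarily small open neighborhoods whose frontiers have dimension at most `n - 1`. -/
def IndLe : ℕ → (X : Type u) → [inst : TopologicalSpace X] → Prop
  | 0, X, _ => IsEmpty X
  | n + 1, X, _i => by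
    exact ∀ (x : X) (U : Set X), IsOpen U → x ∈ U →
      ∃ V : Set X, IsOpen V ∧ x ∈ V ∧ V ⊆ U ∧ IndLe n ↥(frontier V)

open Set Topology Function

section

variable {X Y : Type u} [TopologicalSpace X] [TopologicalSpace Y]

theorem indLe_succ_iff {n : ℕ} : IndLe (n + 1) X ↔ ∀ (x : X) (U : Set X), IsOpen U →
    x ∈ U → ∃ V : Set X, IsOpen V ∧ x ∈ V ∧ V ⊆ U ∧ IndLe n ↥(frontier V) := Iff.rfl

theorem indLe_of_isEmpty [IsEmpty X] : ∀ n, IndLe n X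
  | 0 => ‹IsEmpty X›
  | _ + 1 => fun x => isEmptyElim x

theorem Topology.IsEmbedding.indLe {f : X → Y} (hf : IsEmbedding f) {n : ℕ} (h : IndLe n Y) :
    IndLe n X := by
  induction n generalizing X Y with
  | zero => exact ⟨fun x => h.false (f x)⟩
  | succ n ih =>
    intro x U hU hxU
    obtain ⟨W, hW, rfl⟩ := hf.isOpen_iff.mp hU
    obtain ⟨V, hV, hxV, hVW, hVn⟩ := h (f x) W hW hxU
    have hfr : MapsTo f (frontier (f ⁻¹' V)) (frontier V) :=
      fun z hz => hf.continuous.frontier_preimage_subset V hz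
    exact ⟨f ⁻¹' V, hV.preimage hf.continuous, hxV, preimage_mono hVW,
      ih (hf.restrict hfr) hVn⟩

theorem IndLe.of_mapsTo {f : X → Y} (hf : IsEmbedding f) {n : ℕ} {s : Set X} {t : Set Y}
    (hst : MapsTo f s t) (ht : IndLe n t) : IndLe n s :=
  (hf.restrict hst).indLe ht

theorem IndLe.of_subset {n : ℕ} {s t : Set X} (h : s ⊆ t) (ht : IndLe n t) : IndLe n s :=
  (IsEmbedding.inclusion h).indLe ht

theorem IndLe.image {f : X → Y} (hf : IsEmbedding f) {n : ℕ} {s : Set X} (hs : IndLe n s) :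
    IndLe n (f '' s) :=
  (hf.comp .subtypeVal).toHomeomorph.symm.isEmbedding.comp
    (IsEmbedding.inclusion (by rw [range_comp, Subtype.range_coe])) |>.indLe hs

theorem indLe_one_iff : IndLe 1 X ↔
    ∀ (x : X) (U : Set X), IsOpen U → x ∈ U → ∃ V, IsClopen V ∧ x ∈ V ∧ V ⊆ U := by
  simp only [IndLe, isEmpty_coe_sort, ← isClopen_iff_frontier_eq_empty]
  exact forall₄_congr fun _ _ _ _ => exists_congr fun _ =>
    ⟨fun ⟨_, hx, hU, hV⟩ => ⟨hV, hx, hU⟩, fun ⟨hV, hx, hU⟩ => ⟨hV.isOpen, hx, hU, hV⟩⟩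

theorem IsCompl.isClopen_left {s t : Set X} (h : IsCompl s t) (hs : IsOpen s) (ht : IsOpen t) :
    IsClopen s :=
  ⟨isOpen_compl_iff.1 (h.compl_eq ▸ ht), hs⟩

theorem isClopen_biUnion_of_pairwise_disjoint {ι : Type*} {D : ι → Set X}
    (hD : ∀ i, IsOpen (D i)) (hdisj : Pairwise (Disjoint on D)) (hcov : ⋃ i, D i = univ)
    (S : Set ι) : IsClopen (⋃ i ∈ S, D i) := by
  refine IsCompl.isClopen_left (t := ⋃ i ∈ Sᶜ, D i) ⟨?_, codisjoint_iff.2 ?_⟩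
    (isOpen_biUnion fun i _ => hD i) (isOpen_biUnion fun i _ => hD i)
  · simp only [disjoint_iUnion_left, disjoint_iUnion_right]
    exact fun i hi j hj => hdisj (by rintro rfl; exact hi hj)
  · change (⋃ i ∈ S, D i) ∪ ⋃ i ∈ Sᶜ, D i = univ
    rw [← biUnion_union, union_compl_self, biUnion_univ, hcov]

theorem indLe_one_of_forall_isClopen [RegularSpace X]
    (h : ∀ A B : Set X, IsClosed A → IsClosed B → Disjoint A B →
      ∃ W, IsClopen W ∧ A ⊆ W ∧ Disjoint W B) :
    IndLe 1 X := by
  refine indLe_one_iff.2 fun x U hU hxU => ?_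
  obtain ⟨A, hAx, hA, hAU⟩ := exists_mem_nhds_isClosed_subset (hU.mem_nhds hxU)
  obtain ⟨W, hW, hAW, hWU⟩ := h A Uᶜ hA hU.isClosed_compl (disjoint_compl_right.mono_left hAU)
  exact ⟨W, hW, hAW (mem_of_mem_nhds hAx), fun z hz => not_not.1 (disjoint_left.1 hWU hz)⟩

theorem IndLe.exists_isClopen [LindelofSpace X] (h : IndLe 1 X) {A B : Set X}
    (hA : IsClosed A) (hB : IsClosed B) (hAB : Disjoint A B) :
    ∃ W, IsClopen W ∧ A ⊆ W ∧ Disjoint W B := by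
  rcases isEmpty_or_nonempty X with hX | hX
  · exact ⟨∅, isClopen_empty, fun a => isEmptyElim a, empty_disjoint B⟩
  have hloc : ∀ x, ∃ V, IsClopen V ∧ x ∈ V ∧ (Disjoint V A ∨ Disjoint V B) := by
    intro x
    by_cases hxA : x ∈ A
    · obtain ⟨V, hV, hxV, hVB⟩ :=
        indLe_one_iff.1 h x Bᶜ hB.isOpen_compl (disjoint_left.1 hAB hxA)
      exact ⟨V, hV, hxV, .inr (subset_compl_iff_disjoint_right.1 hVB)⟩
    · obtain ⟨V, hV, hxV, hVA⟩ := indLe_one_iff.1 h x Aᶜ hA.isOpen_compl hxA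
      exact ⟨V, hV, hxV, .inl (subset_compl_iff_disjoint_right.1 hVA)⟩
  choose V hV hxV hVAB using hloc
  obtain ⟨f, hf⟩ := isLindelof_univ.indexed_countable_subcover V (fun x => (hV x).isOpen)
    fun x _ => mem_iUnion.2 ⟨x, hxV x⟩
  set D := disjointed (V ∘ f)
  have hDV : ∀ n, D n ⊆ V (f n) := disjointed_subset _
  have hDcov : ⋃ n, D n = univ := by rw [iUnion_disjointed]; exact univ_subset_iff.1 hf
  have hDo : ∀ n, IsOpen (D n) := fun n =>
    (disjointedRec (p := IsClopen) (fun _ i ht => ht.diff (hV (f i))) (hV (f n))).isOpen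
  refine ⟨⋃ n ∈ {n | Disjoint (V (f n)) B}, D n,
    isClopen_biUnion_of_pairwise_disjoint hDo (disjoint_disjointed _) hDcov _,
    fun a ha => ?_, ?_⟩
  · obtain ⟨n, hn⟩ := mem_iUnion.1 (hDcov ▸ mem_univ a)
    have hA' : ¬ Disjoint (V (f n)) A := fun hd => disjoint_left.1 hd (hDV n hn) ha
    exact mem_biUnion ((hVAB (f n)).resolve_left hA') hn
  · simp only [disjoint_iUnion_left]
    exact fun n hn => hn.mono_left (hDV n)

theorem exists_isOpen_disjoint_closure [NormalSpace X] {A B : Set X} (hA : IsClosed A)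
    (hB : IsClosed B) (hAB : Disjoint A B) :
    ∃ U V, IsOpen U ∧ IsOpen V ∧ A ⊆ U ∧ B ⊆ V ∧ Disjoint (closure U) (closure V) := by
  obtain ⟨U, hU, hAU, hUB⟩ := normal_exists_closure_subset hA hB.isOpen_compl
    (subset_compl_iff_disjoint_right.2 hAB)
  obtain ⟨V, hV, hBV, hVU⟩ := normal_exists_closure_subset hB isClosed_closure.isOpen_compl
    (subset_compl_comm.1 hUB)
  exact ⟨U, V, hU, hV, hAU, hBV, (subset_compl_iff_disjoint_right.1 hVU).symm⟩

theorem exists_isOpen_superset_disjoint_closure [CompletelyNormalSpace X] {P Q : Set X}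
    (hPQ : Disjoint (closure P) Q) (hQP : Disjoint P (closure Q)) :
    ∃ W, IsOpen W ∧ P ⊆ W ∧ Disjoint (closure W) Q := by
  obtain ⟨W, ⟨hW, hPW⟩, V, ⟨hV, hQV⟩, hWV⟩ :=
    ((hasBasis_nhdsSet P).disjoint_iff (hasBasis_nhdsSet Q)).1 (completely_normal hPQ hQP)
  exact ⟨W, hW, hPW, (hWV.closure_left hV).mono_right hQV⟩

theorem disjoint_closure_union_image_compl {Z A B U V : Set X} {S : Set Z}
    (hA : IsClosed A) (hS : IsClosed S) (hAB : Disjoint A B) (hAU : A ⊆ U)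
    (hUS : Subtype.val ⁻¹' closure U ⊆ S) (hV : IsOpen V) (hBV : B ⊆ V)
    (hVS : Subtype.val ⁻¹' closure V ⊆ Sᶜ) :
    Disjoint (closure (A ∪ Subtype.val '' S)) (B ∪ Subtype.val '' Sᶜ) := by
  have hSV : Disjoint (Subtype.val '' S) V := by
    simp only [disjoint_left, mem_image]
    rintro _ ⟨z, hz, rfl⟩ hzV
    exact hVS (subset_closure hzV) hz
  rw [closure_union, hA.closure_eq, disjoint_union_left, disjoint_union_right,
    disjoint_union_right]
  refine ⟨⟨hAB, ?_⟩, ((hSV.closure_left hV).mono_right hBV), ?_⟩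
  · simp only [disjoint_left, mem_image]
    rintro _ ha ⟨z, hz, rfl⟩
    exact hz (hUS (subset_closure (hAU ha)))
  · simp only [disjoint_left, mem_image]
    rintro _ hcl ⟨z, hz, rfl⟩
    exact hz (hS.closure_subset (closure_subtype.2 hcl))

theorem IndLe.exists_isOpen_frontier_disjoint [RegularSpace X] [SecondCountableTopology X]
    {Z : Set X} (hZ : IndLe 1 Z) {A B : Set X} (hA : IsClosed A) (hB : IsClosed B)
    (hAB : Disjoint A B) :
    ∃ W, IsOpen W ∧ A ⊆ W ∧ Disjoint (closure W) B ∧ Disjoint (frontier W) Z := by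
  obtain ⟨U, V, hU, hV, hAU, hBV, hUV⟩ := exists_isOpen_disjoint_closure hA hB hAB
  obtain ⟨S, hS, hUS, hSV⟩ := hZ.exists_isClopen
    (isClosed_closure.preimage continuous_subtype_val)
    (isClosed_closure.preimage continuous_subtype_val) (hUV.preimage Subtype.val)
  have hVS : Subtype.val ⁻¹' closure V ⊆ Sᶜ := subset_compl_iff_disjoint_left.2 hSV
  -- `A ∪ S` and `B ∪ (Z \ S)` are separated sets, so complete normality applies
  have hPQ := disjoint_closure_union_image_compl hA hS.isClosed hAB hAU hUS hV hBV hVS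
  have hQP := disjoint_closure_union_image_compl hB hS.compl.isClosed hAB.symm hBV hVS hU hAU
    (by rwa [compl_compl])
  rw [compl_compl] at hQP
  obtain ⟨W, hW, hPW, hWQ⟩ := exists_isOpen_superset_disjoint_closure hPQ hQP.symm
  refine ⟨W, hW, subset_union_left.trans hPW, hWQ.mono_right subset_union_left,
    disjoint_right.2 fun z hz hzW => ?_⟩
  rw [hW.frontier_eq] at hzW
  by_cases hzS : (⟨z, hz⟩ : Z) ∈ S
  · exact hzW.2 (hPW (.inr ⟨_, hzS, rfl⟩))
  · exact disjoint_left.1 hWQ hzW.1 (.inr ⟨_, hzS, rfl⟩)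

theorem indLe_succ_of_union_eq_univ [RegularSpace X] [SecondCountableTopology X] {n : ℕ}
    {Y Z : Set X} (hYZ : Y ∪ Z = univ) (hY : IndLe n Y) (hZ : IndLe 1 Z) :
    IndLe (n + 1) X := by
  refine indLe_succ_iff.2 fun x U hU hxU => ?_
  obtain ⟨A, hAx, hA, hAU⟩ := exists_mem_nhds_isClosed_subset (hU.mem_nhds hxU)
  obtain ⟨W, hW, hAW, hWU, hWZ⟩ := hZ.exists_isOpen_frontier_disjoint hA hU.isClosed_compl
    (disjoint_compl_right.mono_left hAU)
  refine ⟨W, hW, hAW (mem_of_mem_nhds hAx), fun z hz => ?_, hY.of_subset fun z hz => ?_⟩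
  · by_contra hzU
    exact disjoint_left.1 hWU (subset_closure hz) hzU
  · exact (hYZ ▸ mem_univ z : z ∈ Y ∪ Z).resolve_right (disjoint_left.1 hWZ hz)

theorem IndLe.exists_isOpen_enlarge_cover [NormalSpace X] {C : Set X} [LindelofSpace C]
    (hC : IsClosed C) (hCdim : IndLe 1 C) {G H : Set X}
    (hGH : Disjoint (closure G) (closure H)) :
    ∃ G' H', IsOpen G' ∧ IsOpen H' ∧ closure G ⊆ G' ∧ closure H ⊆ H' ∧
      Disjoint (closure G') (closure H') ∧ C ⊆ G' ∪ H' := by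
  obtain ⟨S, hS, hGS, hSH⟩ := hCdim.exists_isClopen
    (isClosed_closure.preimage continuous_subtype_val)
    (isClosed_closure.preimage continuous_subtype_val) (hGH.preimage Subtype.val)
  have hGSc : Disjoint (closure G) (Subtype.val '' Sᶜ) := by
    simp only [disjoint_left, mem_image]
    rintro _ hz ⟨z, hzS, rfl⟩
    exact hzS (hGS hz)
  have hSH' : Disjoint (Subtype.val '' S) (closure H) := by
    simp only [disjoint_left, mem_image]
    rintro _ ⟨z, hzS, rfl⟩ hz
    exact disjoint_left.1 hSH hzS hz
  have hPQ : Disjoint (closure G ∪ Subtype.val '' S) (closure H ∪ Subtype.val '' Sᶜ) :=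
    disjoint_union_left.2 ⟨disjoint_union_right.2 ⟨hGH, hGSc⟩, disjoint_union_right.2
      ⟨hSH', (disjoint_image_iff Subtype.val_injective).2 disjoint_compl_right⟩⟩
  have himage := hC.isClosedEmbedding_subtypeVal.isClosedMap
  obtain ⟨G', H', hG', hH', hPG', hQH', hGH'⟩ := exists_isOpen_disjoint_closure
    (isClosed_closure.union (himage S hS.isClosed))
    (isClosed_closure.union (himage _ hS.compl.isClosed)) hPQ
  refine ⟨G', H', hG', hH', subset_union_left.trans hPG', subset_union_left.trans hQH', hGH',
    fun z hz => ?_⟩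
  by_cases hzS : (⟨z, hz⟩ : C) ∈ S
  · exact .inl (hPG' (.inr ⟨_, hzS, rfl⟩))
  · exact .inr (hQH' (.inr ⟨_, hzS, rfl⟩))

theorem isCompl_iUnion_of_monotone {α : Type*} {p : ℕ → Set α × Set α} (hp : Monotone p)
    (hdisj : ∀ n, Disjoint (p n).1 (p n).2) (hcov : ∀ x, ∃ n, x ∈ (p n).1 ∪ (p n).2) :
    IsCompl (⋃ n, (p n).1) (⋃ n, (p n).2) := by
  refine ⟨?_, codisjoint_iff.2 (eq_univ_of_forall fun x => ?_)⟩
  · simp only [disjoint_iUnion_left, disjoint_iUnion_right]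
    exact fun i j => (hdisj (max i j)).mono (hp (le_max_right i j)).1 (hp (le_max_left i j)).2
  · obtain ⟨n, hn⟩ := hcov x
    exact hn.imp (mem_iUnion_of_mem n) (mem_iUnion_of_mem n)

theorem exists_seq_of_forall_exists {α : Type*} {P : α → Prop} {R : ℕ → α → α → Prop}
    {a : α} (ha : P a) (h : ∀ n x, P x → ∃ y, P y ∧ R n x y) :
    ∃ f : ℕ → α, f 0 = a ∧ ∀ n, P (f n) ∧ R n (f n) (f (n + 1)) := by
  choose! next hnext using h
  let f : ℕ → α := fun n => Nat.rec (motive := fun _ => α) a next n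
  have hf : ∀ n, P (f n) := fun n => Nat.rec ha (fun n ih => (hnext n _ ih).1) n
  exact ⟨f, rfl, fun n => ⟨hf n, (hnext n _ (hf n)).2⟩⟩

theorem indLe_one_of_iUnion_isClosed [RegularSpace X] [SecondCountableTopology X]
    {ι : Type*} [Countable ι] (C : ι → Set X) (hC : ∀ i, IsClosed (C i))
    (hcov : ⋃ i, C i = univ) (hdim : ∀ i, IndLe 1 (C i)) : IndLe 1 X := by
  refine indLe_one_of_forall_isClopen fun A B hA hB hAB => ?_
  rcases isEmpty_or_nonempty ι with hι | hι
  · refine ⟨∅, isClopen_empty, fun a _ => ?_, empty_disjoint B⟩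
    obtain ⟨i, -⟩ := mem_iUnion.1 (hcov ▸ mem_univ a)
    exact isEmptyElim i
  obtain ⟨g, hg⟩ := exists_surjective_nat ι
  obtain ⟨U, V, hU, hV, hAU, hBV, hUV⟩ := exists_isOpen_disjoint_closure hA hB hAB
  obtain ⟨p, hp0, hp⟩ := exists_seq_of_forall_exists
    (P := fun p : Set X × Set X => IsOpen p.1 ∧ IsOpen p.2 ∧
      Disjoint (closure p.1) (closure p.2))
    (R := fun n p q => closure p.1 ⊆ q.1 ∧ closure p.2 ⊆ q.2 ∧ C (g n) ⊆ q.1 ∪ q.2)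
    (a := (U, V)) ⟨hU, hV, hUV⟩ fun n p hp => by
      obtain ⟨G, H, hG, hH, hpG, hpH, hGH, hCGH⟩ :=
        (hdim (g n)).exists_isOpen_enlarge_cover (hC (g n)) hp.2.2
      exact ⟨(G, H), ⟨hG, hH, hGH⟩, hpG, hpH, hCGH⟩
  have hmono : Monotone p := monotone_nat_of_le_succ fun n =>
    ⟨subset_closure.trans (hp n).2.1, subset_closure.trans (hp n).2.2.1⟩
  have hcompl := isCompl_iUnion_of_monotone hmono
    (fun n => (hp n).1.2.2.mono subset_closure subset_closure) fun z => by
      obtain ⟨i, hi⟩ := mem_iUnion.1 (hcov ▸ mem_univ z)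
      obtain ⟨n, rfl⟩ := hg i
      exact ⟨n + 1, (hp n).2.2.2 hi⟩
  have hU₀ : (p 0).1 ⊆ ⋃ n, (p n).1 := subset_iUnion (fun n => (p n).1) 0
  have hV₀ : (p 0).2 ⊆ ⋃ n, (p n).2 := subset_iUnion (fun n => (p n).2) 0
  rw [hp0] at hU₀ hV₀
  exact ⟨_, hcompl.isClopen_left (isOpen_iUnion fun n => (hp n).1.1)
      (isOpen_iUnion fun n => (hp n).1.2.1),
    hAU.trans hU₀, hcompl.disjoint.mono_right (hBV.trans hV₀)⟩

theorem IndLe.exists_iUnion_isClosed_indLe_one_compl [SecondCountableTopology X] {n : ℕ}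
    (h : IndLe (n + 1) X) :
    ∃ F : ℕ → Set X, (∀ k, IsClosed (F k)) ∧ (∀ k, IndLe n (F k)) ∧ IndLe 1 ↥(⋃ k, F k)ᶜ := by
  obtain ⟨b, hbc, -, hb⟩ := TopologicalSpace.exists_countable_basis X
  obtain ⟨e, he⟩ := (((hbc.prod hbc).mono inter_subset_left).insert (∅, ∅)).exists_eq_range
    (insert_nonempty (∅, ∅) (b ×ˢ b ∩
      {p | ∃ V, IndLe n (frontier V) ∧ p.1 ⊆ V ∧ V ⊆ p.2}))
  -- `(∅, ∅)` is a good pair too; it makes the family nonempty, so it can be enumerated by `ℕ`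
  have hP : ∀ k, ∃ V, IndLe n (frontier V) ∧ (e k).1 ⊆ V ∧ V ⊆ (e k).2 := by
    intro k
    rcases he ▸ mem_range_self k with hk | ⟨-, hk⟩
    · rw [hk]
      refine ⟨∅, ?_, subset_rfl, subset_rfl⟩
      rw [frontier_empty]
      exact indLe_of_isEmpty n
    · exact hk
  choose V hVn hV₁ hV₂ using hP
  refine ⟨fun k => frontier (V k), fun k => isClosed_frontier, hVn, indLe_one_iff.2 ?_⟩
  rintro z _ ⟨O, hO, rfl⟩ hzO
  obtain ⟨s, hs, hzs, hsO⟩ := hb.exists_subset_of_mem_open hzO hO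
  obtain ⟨W, hW, hzW, hWs, hWn⟩ := indLe_succ_iff.1 h z s (hb.isOpen hs) hzs
  obtain ⟨t, ht, hzt, htW⟩ := hb.exists_subset_of_mem_open hzW hW
  obtain ⟨k, hk⟩ : (t, s) ∈ range e := he ▸ .inr ⟨⟨ht, hs⟩, W, hWn, htW, hWs⟩
  have htV := hV₁ k
  have hVs := hV₂ k
  rw [hk] at htV hVs
  refine ⟨Subtype.val ⁻¹' V k, isClopen_iff_frontier_eq_empty.2 (eq_empty_of_forall_notMem
    fun w hw => w.2 (mem_iUnion_of_mem k (continuous_subtype_val.frontier_preimage_subset _ hw))),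
    htV hzt, fun w hw => hsO (hVs hw)⟩

theorem indLe_of_iUnion_isClosed [RegularSpace X] [SecondCountableTopology X] {n : ℕ}
    {ι : Type*} [Countable ι] (C : ι → Set X) (hC : ∀ i, IsClosed (C i))
    (hcov : ⋃ i, C i = univ) (hdim : ∀ i, IndLe n (C i)) : IndLe n X := by
  induction n generalizing X ι with
  | zero =>
    refine ⟨fun x => ?_⟩
    obtain ⟨i, hi⟩ := mem_iUnion.1 (hcov ▸ mem_univ x)
    exact (hdim i).false ⟨x, hi⟩
  | succ n ih =>
    choose F hFc hFn hrem using fun i => (hdim i).exists_iUnion_isClosed_indLe_one_compl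
    set Z := ⋃ p : ι × ℕ, Subtype.val '' F p.1 p.2
    have hFZ : ∀ p : ι × ℕ, Subtype.val '' F p.1 p.2 ⊆ Z := subset_iUnion (fun p : ι × ℕ => _)
    have hZ : IndLe n Z := by
      refine ih (fun p : ι × ℕ => (Subtype.val ⁻¹' (Subtype.val '' F p.1 p.2) : Set Z))
        (fun p => ((hC p.1).isClosedEmbedding_subtypeVal.isClosedMap _ (hFc _ _)).preimage
          continuous_subtype_val) ?_ fun p => ((hFn _ _).image .subtypeVal).of_mapsTo
            .subtypeVal fun z hz => hz
      refine eq_univ_of_forall fun z => ?_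
      obtain ⟨p, hp⟩ := mem_iUnion.1 z.2
      exact mem_iUnion.2 ⟨p, hp⟩
    -- `Zᶜ` meets each `C i` inside its zero-dimensional remainder
    have hZc : IndLe 1 ↥Zᶜ := by
      refine indLe_one_of_iUnion_isClosed (fun i => (Subtype.val ⁻¹' C i : Set ↥Zᶜ))
        (fun i => (hC i).preimage continuous_subtype_val) ?_ fun i => ?_
      · refine eq_univ_of_forall fun z => ?_
        obtain ⟨i, hi⟩ := mem_iUnion.1 (hcov ▸ mem_univ z.1)
        exact mem_iUnion.2 ⟨i, hi⟩
      · refine ((hrem i).image .subtypeVal).of_mapsTo .subtypeVal fun z (hz : z.1 ∈ C i) =>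
          (⟨⟨z, hz⟩, ?_, rfl⟩ : z.1 ∈ Subtype.val '' (⋃ k, F i k)ᶜ)
        simp only [mem_compl_iff, mem_iUnion, not_exists]
        exact fun k hk => z.2 (hFZ (i, k) ⟨_, hk, rfl⟩)
    exact indLe_succ_of_union_eq_univ (union_compl_self Z) hZ hZc

theorem indLe_of_subset_sUnion [RegularSpace X] {S : Set X} [SecondCountableTopology S]
    {n : ℕ} {𝓣 : Set (Set X)} (h𝓣 : 𝓣.Countable) (hclosed : ∀ T ∈ 𝓣, IsClosed T) (hS : S ⊆ ⋃₀ 𝓣)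
    (hdim : ∀ T ∈ 𝓣, IndLe n ↥(S ∩ T)) : IndLe n S := by
  have := h𝓣.to_subtype
  refine indLe_of_iUnion_isClosed (fun T : 𝓣 => (Subtype.val ⁻¹' T.1 : Set S))
    (fun T => (hclosed T T.2).preimage continuous_subtype_val) ?_
    fun T => (hdim T T.2).of_mapsTo .subtypeVal fun z (hz : z.1 ∈ T.1) =>
      (⟨z.2, hz⟩ : z.1 ∈ S ∩ T.1)
  refine eq_univ_of_forall fun z => ?_
  obtain ⟨T, hT, hzT⟩ := hS z.2
  exact mem_iUnion.2 ⟨⟨T, hT⟩, hzT⟩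

def Separates (L : Set X) (x y : X) : Prop :=
  ∃ U V : Set X, IsOpen U ∧ IsOpen V ∧ Disjoint U V ∧ x ∈ U ∧ y ∈ V ∧ U ∪ V = Lᶜ

theorem Separates.preimage {f : Y → X} (hf : Continuous f) {L : Set X} {x y : Y}
    (h : Separates L (f x) (f y)) : Separates (f ⁻¹' L) x y := by
  obtain ⟨U, V, hU, hV, hUV, hx, hy, hL⟩ := h
  exact ⟨f ⁻¹' U, f ⁻¹' V, hU.preimage hf, hV.preimage hf, hUV.preimage f, hx, hy, by
    rw [← preimage_union, hL, preimage_compl]⟩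

theorem exists_isOpen_frontier_subset_sUnion [R1Space X] [LocallyCompactSpace X]
    {𝓛 : Set (Set X)} {x : X} {U : Set X} (hU : U ∈ 𝓝 x)
    (hsep : ∀ y ≠ x, ∃ L ∈ 𝓛, Separates L x y) :
    ∃ V, IsOpen V ∧ x ∈ V ∧ V ⊆ U ∧ IsCompact (frontier V) ∧
      ∃ 𝓣 ⊆ 𝓛, 𝓣.Finite ∧ frontier V ⊆ ⋃₀ 𝓣 := by
  unfold Separates at hsep
  choose! L hL U' V' hU' hV' hUV hxU hyV hLc using hsep
  obtain ⟨C, hC, hCU, hCc⟩ := local_compact_nhds hU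
  set D := interior C
  have hDc : IsCompact (closure D) :=
    hCc.closure.of_isClosed_subset isClosed_closure (closure_mono interior_subset)
  have hxD : x ∈ D := mem_interior_iff_mem_nhds.2 hC
  have hne : ∀ y ∈ frontier D, y ≠ x := by
    rintro y hy rfl
    exact hy.2 (by rwa [interior_interior])
  obtain ⟨t, htD, htfin, htcov⟩ := (hDc.of_isClosed_subset isClosed_frontier
    frontier_subset_closure).elim_finite_subcover_image (fun y hy => hV' y (hne y hy))
    fun y hy => mem_biUnion hy (hyV y (hne y hy))
  have hne' : ∀ y ∈ t, y ≠ x := fun y hy => hne y (htD hy)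
  set V := D ∩ ⋂ y ∈ t, U' y
  have hV : IsOpen V :=
    isOpen_interior.inter (htfin.isOpen_biInter fun y hy => hU' y (hne' y hy))
  have hfrV : frontier V ⊆ closure D :=
    frontier_subset_closure.trans (closure_mono inter_subset_left)
  refine ⟨V, hV, ⟨hxD, mem_iInter₂.2 fun y hy => hxU y (hne' y hy)⟩,
    inter_subset_left.trans (interior_subset.trans hCU),
    hDc.of_isClosed_subset isClosed_frontier hfrV, L '' t,
    image_subset_iff.2 fun y hy => hL y (hne' y hy), htfin.image L, fun z hz => ?_⟩
  -- a point of `∂V` on no `L y` lies in every `U' y`, as `closure (U' y)` misses `V' y`;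
  -- so it is not on `∂D`, hence lies in `D` and then in `V`
  by_contra hzL
  simp only [sUnion_image, mem_iUnion₂, not_exists] at hzL
  have hzU : ∀ y ∈ t, z ∈ U' y := by
    intro y hy
    have hzUV : z ∈ U' y ∪ V' y := hLc y (hne' y hy) ▸ hzL y hy
    refine hzUV.resolve_right fun hzV => disjoint_left.1
      ((hUV y (hne' y hy)).closure_left (hV' y (hne' y hy))) ?_ hzV
    exact closure_mono (inter_subset_right.trans (biInter_subset_of_mem hy)) hz.1
  have hzD : z ∈ D := by
    by_contra hzD
    obtain ⟨y, hy, hzV⟩ := mem_iUnion₂.1 (htcov ⟨hfrV hz, by rwa [interior_interior]⟩)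
    exact disjoint_left.1 (hUV y (hne' y hy)) (hzU y hy) hzV
  exact hz.2 (hV.interior_eq.symm ▸ ⟨hzD, mem_iInter₂.2 hzU⟩)

end

/-- Behrstock–Minsky Lemma 4.2: if a metric space `X` admits a family of closed
subspaces which separates points and whose members have all locally compact
subspaces of small inductive dimension at most `N - 1`, then every locally compact
subspace of `X` has small inductive dimension at most `N`. -/
theorem stmt14 {X : Type u} [MetricSpace X] (N : ℕ)
    (𝓛 : Set (Set X)) (hclosed : ∀ L ∈ 𝓛, IsClosed L)
    (hsep : ∀ x y : X, x ≠ y → ∃ L ∈ 𝓛, ∃ U V : Set X,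
      IsOpen U ∧ IsOpen V ∧ Disjoint U V ∧ x ∈ U ∧ y ∈ V ∧ U ∪ V = Lᶜ)
    (hdim : ∀ L ∈ 𝓛, ∀ K : Set X, K ⊆ L → LocallyCompactSpace ↥K → IndLe N ↥K)
    (K : Set X) (hK : LocallyCompactSpace ↥K) :
    IndLe (N + 1) ↥K := by
  refine indLe_succ_iff.2 fun x U hU hxU => ?_
  obtain ⟨V, hV, hxV, hVU, hcpt, 𝓣, h𝓣, hfin, hcov⟩ :=
    exists_isOpen_frontier_subset_sUnion (𝓛 := (Subtype.val ⁻¹' ·) '' 𝓛) (hU.mem_nhds hxU)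
      fun y hy =>
        let ⟨L, hL, hLxy⟩ := hsep x y (Subtype.coe_injective.ne hy.symm)
        ⟨_, mem_image_of_mem _ hL, Separates.preimage continuous_subtype_val hLxy⟩
  refine ⟨V, hV, hxV, hVU, ?_⟩
  have := isCompact_iff_compactSpace.1 hcpt
  refine indLe_of_subset_sUnion hfin.countable (fun T hT => ?_) hcov fun T hT => ?_ <;>
    obtain ⟨L, hL, rfl⟩ := h𝓣 hT
  · exact (hclosed L hL).preimage continuous_subtype_val
  · have := isCompact_iff_compactSpace.1 ((hcpt.inter_right ((hclosed L hL).preimage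
      continuous_subtype_val)).image continuous_subtype_val)
    exact (hdim L hL _ (image_subset_iff.2 inter_subset_right) inferInstance).of_mapsTo
      .subtypeVal (mapsTo_image _ _)
end
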